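/- Let H be a hypergraph with vertices v_1,…,v_n and hyperedges e_1,…,e_m, and let Ω be its nilpotent hypergraph adjacency matrix with entries in 𝔷_n ⊗ 𝔦_m. Then for every integer k ≥ 2 and every index 1 ≤ i ≤ n, one has (Ω^k)_{ii} = Σ_{I,J} ω_{I,J} · ζ_I ⊗ ε_J, where the sum is over pairs of subsets I ⊆ {1,…,n} with |I| = k and J ⊆ {1,…,m}, and ω_{I,J} is the number of k-cycles in H based at v_i whose set of visited vertices is {v_t : t ∈ I} and whose set of traversed hyperedges is {e_ℓ : ℓ ∈ J}. -/

import Mathlib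

/-!
Multiplying out `Ω^k = (XZ)^k`, the entry `(Ω^k)_{ij}` is the sum, over vertex sequences
`v_0 = i, …, v_k = j` and hyperedges `e_1, …, e_k` with `v_{t-1}, v_t ∈ e_t`, of
`ε_{e_1} ζ_{v_1} ⋯ ε_{e_k} ζ_{v_k}`. The blades commute, `ζ_v² = 0` and `ε_ℓ² = ε_ℓ`, so this
product is `ζ_{{v_1,…,v_k}} ε_{{e_1,…,e_k}}` when `v_1, …, v_k` are distinct and `0` otherwise;
the sequence may still stall (`v_{t-1} = v_t`), as `Ω` has a nonzero diagonal. For a closed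
sequence the tuple `(v_1, …, v_k)` is a rotation of `(v_0, …, v_{k-1})`, so one is injective iff
the other is, and for `k ≥ 2` the rotation has no fixed index, which rules out stalls. Hence the
surviving terms are exactly the `k`-cycles at `v_i`, and grouping them by vertex and edge sets
gives the counts `ω_{I,J}`.
-/

open Finset

/-- Regular-representation action of the zeon blade `ζ_I` (product of the zeon generators
`ζ_i`, `i ∈ I`, satisfying `ζ_i ^ 2 = 0`) on the coefficient space of the algebra
`𝔷 ⊗ 𝔦`:  a multiplication by `ζ_I` sends the basis blade indexed by `(S, T)` to the one
indexed by `(I ∪ S, T)` when `I` and `S` are disjoint, and to `0` otherwise. -/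
noncomputable def zetaBlade (α γ : Type*) [DecidableEq α] (I : Finset α) :
    Module.End ℝ ((Finset α × γ) → ℝ) where
  toFun c := fun p => if I ⊆ p.1 then c (p.1 \ I, p.2) else 0
  map_add' x y := by
    funext p
    by_cases h : I ⊆ p.1 <;> simp [h]
  map_smul' r x := by
    funext p
    by_cases h : I ⊆ p.1 <;> simp [h]

/-- Regular-representation action of the idem-Clifford blade `ε_J` (product of the
idempotent generators `ε_j`, `j ∈ J`, satisfying `ε_j ^ 2 = ε_j`) on the coefficient
space: multiplication by `ε_J` sends the basis blade indexed by `(S, T)` to the one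
indexed by `(S, T ∪ J)`. -/
noncomputable def epsBlade (γ β : Type*) [DecidableEq β] (J : Finset β) :
    Module.End ℝ ((γ × Finset β) → ℝ) where
  toFun c := fun p => ∑ T ∈ p.2.powerset.filter (fun T => T ∪ J = p.2), c (p.1, T)
  map_add' x y := by
    funext p
    simp [Finset.sum_add_distrib]
  map_smul' r x := by
    funext p
    simp [Finset.mul_sum]

/-- The nilpotent hypergraph adjacency matrix `Ω = X Z` of the hypergraph on vertices
`Fin n` whose hyperedges are `E 0, …, E (m-1)`:  `X i ℓ = ε_ℓ` if `v_i ∈ e_ℓ`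
(and `0` otherwise), `Z ℓ j = ζ_j` if `v_j ∈ e_ℓ` (and `0` otherwise). -/
noncomputable def Omega {n m : ℕ} (E : Fin m → Finset (Fin n)) :
    Matrix (Fin n) (Fin n)
      (Module.End ℝ ((Finset (Fin n) × Finset (Fin m)) → ℝ)) :=
  (Matrix.of fun (i : Fin n) (l : Fin m) =>
      if i ∈ E l then epsBlade (Finset (Fin n)) (Fin m) {l} else 0) *
  (Matrix.of fun (l : Fin m) (j : Fin n) =>
      if j ∈ E l then zetaBlade (Fin n) (Finset (Fin m)) {j} else 0)

/-- A `k`-walk in the hypergraph with hyperedges `E`: consecutive vertices are distinct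
and both belong to the hyperedge used at that step. -/
def IsWalk {n m : ℕ} (E : Fin m → Finset (Fin n)) {k : ℕ}
    (vs : Fin (k + 1) → Fin n) (es : Fin k → Fin m) : Prop :=
  ∀ t : Fin k, vs t.castSucc ≠ vs t.succ ∧ vs t.castSucc ∈ E (es t) ∧ vs t.succ ∈ E (es t)

section Blades

variable {α β γ : Type*} [DecidableEq α] [DecidableEq β]

lemma zetaBlade_apply (I : Finset α) (c : Finset α × γ → ℝ) (p : Finset α × γ) :
    zetaBlade α γ I c p = if I ⊆ p.1 then c (p.1 \ I, p.2) else 0 := rfl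

lemma epsBlade_apply (J : Finset β) (c : γ × Finset β → ℝ) (p : γ × Finset β) :
    epsBlade γ β J c p = ∑ T ∈ p.2.powerset.filter (fun T => T ∪ J = p.2), c (p.1, T) := rfl

@[simp]
lemma zetaBlade_empty : zetaBlade α γ ∅ = 1 := by
  ext c p
  simp [zetaBlade_apply]

@[simp]
lemma epsBlade_empty : epsBlade γ β ∅ = 1 := by
  ext c p
  rw [epsBlade_apply, Finset.sum_eq_single p.2] <;> simp +contextual

lemma zetaBlade_mul (I I' : Finset α) :
    zetaBlade α γ I * zetaBlade α γ I' =
      if Disjoint I I' then zetaBlade α γ (I ∪ I') else 0 := by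
  ext c p
  simp only [Module.End.mul_apply, zetaBlade_apply, Finset.subset_sdiff, disjoint_comm (a := I')]
  by_cases hd : Disjoint I I'
  · simp [zetaBlade_apply, hd, Finset.union_subset_iff, sdiff_sdiff_left, ite_and]
  · simp [hd]

lemma epsBlade_mul (J J' : Finset β) :
    epsBlade γ β J * epsBlade γ β J' = epsBlade γ β (J ∪ J') := by
  ext c ⟨S, U⟩
  simp only [Module.End.mul_apply, epsBlade_apply]
  rw [← Finset.sum_biUnion]
  · refine Finset.sum_congr ?_ fun _ _ => rfl
    ext T
    simp only [Finset.mem_biUnion, Finset.mem_filter, Finset.mem_powerset]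
    constructor
    · rintro ⟨T', ⟨-, rfl⟩, hT, rfl⟩
      exact ⟨hT.trans Finset.subset_union_left, by grind⟩
    · rintro ⟨-, rfl⟩
      exact ⟨T ∪ J', ⟨by grind, by grind⟩, Finset.subset_union_left, rfl⟩
  · intro T₁ _ T₂ _ hne
    refine Finset.disjoint_left.mpr fun T h₁ h₂ => hne ?_
    simp only [Finset.mem_filter] at h₁ h₂
    rw [← h₁.2, ← h₂.2]

lemma commute_zetaBlade_epsBlade (I : Finset α) (J : Finset β) :
    Commute (zetaBlade α (Finset β) I) (epsBlade (Finset α) β J) := by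
  ext c p
  simp only [Module.End.mul_apply, zetaBlade_apply, epsBlade_apply]
  split_ifs <;> simp_all

end Blades

section Monomials

variable {α β : Type*} [DecidableEq α] [DecidableEq β] (γ : Type*) {k : ℕ}

lemma Finset.image_univ_snoc (g : Fin k → α) (x : α) :
    univ.image (Fin.snoc g x : Fin (k + 1) → α) = insert x (univ.image g) := by
  ext
  simp [Fin.exists_fin_succ', or_comm, eq_comm]

/-- The zeon monomial `ζ_{g 0} ⋯ ζ_{g (k-1)}`: it vanishes as soon as a generator repeats. -/
noncomputable def zetaMonomial (g : Fin k → α) : Module.End ℝ (Finset α × γ → ℝ) :=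
  if Function.Injective g then zetaBlade α γ (univ.image g) else 0

lemma zetaMonomial_of_isEmpty [IsEmpty (Fin k)] (g : Fin k → α) : zetaMonomial γ g = 1 := by
  simp [zetaMonomial, Function.injective_of_subsingleton, Finset.univ_eq_empty]

lemma zetaMonomial_snoc (g : Fin k → α) (x : α) :
    zetaMonomial γ (Fin.snoc g x : Fin (k + 1) → α) = zetaMonomial γ g * zetaBlade α γ {x} := by
  by_cases hg : Function.Injective g
  · rw [zetaMonomial, zetaMonomial, if_pos hg, zetaBlade_mul, Finset.image_univ_snoc,
      Finset.insert_eq, Finset.union_comm]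
    simp only [Fin.snoc_injective_iff, hg, true_and, Finset.disjoint_singleton_right]
    simp
  · simp [zetaMonomial, Fin.snoc_injective_iff, hg]

lemma epsBlade_image_snoc (es : Fin k → β) (l : β) :
    epsBlade γ β (univ.image (Fin.snoc es l : Fin (k + 1) → β)) =
      epsBlade γ β (univ.image es) * epsBlade γ β {l} := by
  rw [Finset.image_univ_snoc, epsBlade_mul, Finset.insert_eq, Finset.union_comm]

end Monomials

section Walks

variable {n m : ℕ} (E : Fin m → Finset (Fin n)) {k : ℕ}

def StepsInEdges (vs : Fin (k + 1) → Fin n) (es : Fin k → Fin m) : Prop :=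
  ∀ t : Fin k, vs t.castSucc ∈ E (es t) ∧ vs t.succ ∈ E (es t)

instance (vs : Fin (k + 1) → Fin n) (es : Fin k → Fin m) :
    Decidable (StepsInEdges E vs es) :=
  by unfold StepsInEdges; infer_instance

lemma stepsInEdges_snoc (vs : Fin (k + 1) → Fin n) (es : Fin k → Fin m) (x : Fin n) (l : Fin m) :
    StepsInEdges E (Fin.snoc vs x) (Fin.snoc es l) ↔
      StepsInEdges E vs es ∧ vs (Fin.last k) ∈ E l ∧ x ∈ E l := by
  simp [StepsInEdges, Fin.forall_fin_succ', Fin.succ_castSucc, -Fin.castSucc_succ]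

lemma isWalk_iff (vs : Fin (k + 1) → Fin n) (es : Fin k → Fin m) :
    IsWalk E vs es ↔ StepsInEdges E vs es ∧ ∀ t : Fin k, vs t.castSucc ≠ vs t.succ := by
  simp only [IsWalk, StepsInEdges]
  grind

/-- The monomial `ζ_{v_1} ⋯ ζ_{v_k} ε_{e_1} ⋯ ε_{e_k}` of a walk; the start `v_0` is left out. -/
noncomputable def walkMonomial (vs : Fin (k + 1) → Fin n) (es : Fin k → Fin m) :
    Module.End ℝ (Finset (Fin n) × Finset (Fin m) → ℝ) :=
  if StepsInEdges E vs es then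
    zetaMonomial (Finset (Fin m)) (Fin.tail vs) * epsBlade (Finset (Fin n)) (Fin m) (univ.image es)
  else 0

lemma walkMonomial_of_fin_zero (vs : Fin 1 → Fin n) (es : Fin 0 → Fin m) :
    walkMonomial E vs es = 1 := by
  simp [walkMonomial, StepsInEdges, zetaMonomial_of_isEmpty, Finset.univ_eq_empty]

lemma omega_apply (x y : Fin n) :
    Omega E x y = ∑ l, if x ∈ E l ∧ y ∈ E l then
      epsBlade (Finset (Fin n)) (Fin m) {l} * zetaBlade (Fin n) (Finset (Fin m)) {y} else 0 := by
  simp only [Omega, Matrix.mul_apply, Matrix.of_apply, ite_zero_mul_ite_zero]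

lemma walkMonomial_snoc (vs : Fin (k + 1) → Fin n) (es : Fin k → Fin m) (x : Fin n) (l : Fin m) :
    walkMonomial E (Fin.snoc vs x) (Fin.snoc es l) =
      walkMonomial E vs es * if vs (Fin.last k) ∈ E l ∧ x ∈ E l then
        epsBlade (Finset (Fin n)) (Fin m) {l} * zetaBlade (Fin n) (Finset (Fin m)) {x} else 0 := by
  have htail : Fin.tail (Fin.snoc vs x : Fin (k + 2) → Fin n) = Fin.snoc (Fin.tail vs) x := by
    funext t
    cases t using Fin.lastCases <;> simp [Fin.tail, Fin.succ_castSucc, -Fin.castSucc_succ]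
  simp only [walkMonomial, stepsInEdges_snoc, htail, zetaMonomial_snoc, epsBlade_image_snoc]
  by_cases hw : StepsInEdges E vs es
  · by_cases hl : vs (Fin.last k) ∈ E l ∧ x ∈ E l
    · simp only [hw, hl, and_self, if_true]
      rw [mul_assoc, mul_assoc, ← mul_assoc (epsBlade _ _ (univ.image es)), epsBlade_mul,
        (commute_zetaBlade_epsBlade _ _).eq]
    · simp [hw, hl]
  · simp [hw]

end Walks

lemma omega_pow_apply {n m : ℕ} (E : Fin m → Finset (Fin n)) (k : ℕ) (i j : Fin n) :
    (Omega E ^ k) i j = ∑ vs : Fin (k + 1) → Fin n, ∑ es : Fin k → Fin m,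
      if vs 0 = i ∧ vs (Fin.last k) = j then walkMonomial E vs es else 0 := by
  induction k generalizing j with
  | zero =>
    rw [← (Equiv.funUnique (Fin 1) (Fin n)).symm.sum_comp]
    simp [walkMonomial_of_fin_zero, Matrix.one_apply, ite_and]
  | succ k ih =>
    calc (Omega E ^ (k + 1)) i j = ∑ x, (Omega E ^ k) i x * Omega E x j := by
          rw [pow_succ, Matrix.mul_apply]
      _ = ∑ vs : Fin (k + 1) → Fin n, ∑ es : Fin k → Fin m,
            if vs 0 = i then walkMonomial E vs es * Omega E (vs (Fin.last k)) j else 0 := by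
          simp only [ih, Finset.sum_mul, ite_zero_mul]
          rw [Finset.sum_comm]
          refine Finset.sum_congr rfl fun vs _ => ?_
          rw [Fintype.sum_eq_single (vs (Fin.last k)) fun x hx => by simp [Ne.symm hx]]
          simp
      _ = ∑ y : Fin n, ∑ vs : Fin (k + 1) → Fin n, ∑ l : Fin m, ∑ es : Fin k → Fin m,
            if vs 0 = i ∧ y = j then
              walkMonomial E (Fin.snoc vs y) (Fin.snoc es l) else 0 := by
          rw [Fintype.sum_eq_single j fun y hy => by simp [hy]]
          refine Finset.sum_congr rfl fun vs _ => ?_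
          rw [Finset.sum_comm]
          refine Finset.sum_congr rfl fun es _ => ?_
          by_cases h : vs 0 = i <;> simp [h, walkMonomial_snoc, omega_apply, Finset.mul_sum]
      _ = _ := by
          rw [← (Fin.snocEquiv fun _ : Fin (k + 2) => Fin n).sum_comp, Fintype.sum_prod_type]
          simp_rw [← (Fin.snocEquiv fun _ : Fin (k + 1) => Fin m).sum_comp, Fintype.sum_prod_type]
          simp [Fin.snocEquiv]

section ClosedWalks

variable {α : Type*} {k : ℕ} (vs : Fin (k + 1) → α)

lemma Fin.tail_eq_init_comp_finRotate (h : vs (Fin.last k) = vs 0) :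
    Fin.tail vs = Fin.init vs ∘ finRotate k := by
  cases k with
  | zero => exact funext fun t => t.elim0
  | succ k =>
    funext t
    cases t using Fin.lastCases with
    | last => simp [Fin.tail, Fin.init, h]
    | cast s =>
      have hs : finRotate (k + 1) s.castSucc = s.succ := Fin.ext (by simp)
      simp [Fin.tail, Fin.init, hs]

lemma Fin.injective_tail_iff_of_closed (h : vs (Fin.last k) = vs 0) :
    Function.Injective (Fin.tail vs) ↔ Function.Injective (Fin.init vs) := by
  rw [Fin.tail_eq_init_comp_finRotate vs h, Equiv.injective_comp]

lemma Fin.image_tail_of_closed [DecidableEq α] (h : vs (Fin.last k) = vs 0) :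
    univ.image (Fin.tail vs) = univ.image (Fin.init vs) := by
  rw [Fin.tail_eq_init_comp_finRotate vs h, Finset.image_comp, Finset.image_univ_equiv]

lemma Fin.image_init_of_closed [DecidableEq α] (hk : k ≠ 0) (h : vs (Fin.last k) = vs 0) :
    univ.image (Fin.init vs) = univ.image vs := by
  obtain ⟨k, rfl⟩ := Nat.exists_eq_succ_of_ne_zero hk
  conv_rhs => rw [← Fin.snoc_init_self vs]
  rw [Finset.image_univ_snoc, Finset.insert_eq_of_mem]
  exact Finset.mem_image.2 ⟨0, Finset.mem_univ _, by simp [Fin.init, h]⟩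

lemma Fin.card_image_of_closed [DecidableEq α] (hk : k ≠ 0) (h : vs (Fin.last k) = vs 0)
    (hinj : Function.Injective (Fin.init vs)) : (univ.image vs).card = k := by
  rw [← Fin.image_init_of_closed vs hk h, Finset.card_image_of_injective _ hinj, Finset.card_univ,
    Fintype.card_fin]

lemma Fin.castSucc_ne_succ_of_closed (hk : 2 ≤ k) (h : vs (Fin.last k) = vs 0)
    (hinj : Function.Injective (Fin.init vs)) (t : Fin k) : vs t.castSucc ≠ vs t.succ := by
  have hrot : finRotate k t ≠ t :=
    Equiv.Perm.mem_support.1 (by simp [support_finRotate_of_le hk])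
  exact hinj.ne hrot.symm |>.trans_eq (congrFun (Fin.tail_eq_init_comp_finRotate vs h) t).symm

end ClosedWalks

lemma Finset.sum_sum_natCard_fiber_smul {ι κ₁ κ₂ M : Type*} [Fintype ι] [DecidableEq κ₁]
    [DecidableEq κ₂] [AddCommMonoid M] (P : ι → Prop) [DecidablePred P] (f : ι → κ₁) (g : ι → κ₂)
    (s : Finset κ₁) (t : Finset κ₂) (hf : ∀ w, P w → f w ∈ s) (hg : ∀ w, P w → g w ∈ t)
    (Q : ι → κ₁ → κ₂ → Prop) (hQ : ∀ w a b, Q w a b ↔ P w ∧ f w = a ∧ g w = b)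
    (F : κ₁ → κ₂ → M) :
    ∑ a ∈ s, ∑ b ∈ t, Nat.card {w // Q w a b} • F a b = ∑ w, if P w then F (f w) (g w) else 0 := by
  classical
  simp only [hQ, Nat.card_eq_fintype_card, Fintype.card_subtype, ← Finset.sum_const,
    Finset.sum_filter]
  simp_rw [Finset.sum_comm (s := t), Finset.sum_comm (s := s)]
  refine Finset.sum_congr rfl fun w _ => ?_
  by_cases hP : P w
  · simp [hP, ite_and, hf w hP, hg w hP]
  · simp [hP]

section Cycles

variable {n m k : ℕ} (E : Fin m → Finset (Fin n))

open Classical in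
lemma walkMonomial_of_closed (hk : 2 ≤ k) (vs : Fin (k + 1) → Fin n) (es : Fin k → Fin m)
    (h : vs (Fin.last k) = vs 0) :
    walkMonomial E vs es =
      if IsWalk E vs es ∧ Function.Injective (Fin.init vs) then
        zetaBlade (Fin n) (Finset (Fin m)) (univ.image vs) *
          epsBlade (Finset (Fin n)) (Fin m) (univ.image es)
      else 0 := by
  simp only [walkMonomial, zetaMonomial, Fin.injective_tail_iff_of_closed vs h,
    Fin.image_tail_of_closed vs h, Fin.image_init_of_closed vs (by omega : k ≠ 0) h]
  by_cases hinj : Function.Injective (Fin.init vs)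
  · have hwalk : IsWalk E vs es ↔ StepsInEdges E vs es := by
      rw [isWalk_iff, and_iff_left_iff_imp]
      exact fun _ => Fin.castSucc_ne_succ_of_closed vs hk h hinj
    simp [hinj, hwalk]
  · simp [hinj]

def IsCycleAt (i : Fin n) (w : (Fin (k + 1) → Fin n) × (Fin k → Fin m)) : Prop :=
  IsWalk E w.1 w.2 ∧ w.1 0 = i ∧ w.1 (Fin.last k) = i ∧ Function.Injective (Fin.init w.1)

variable {E} in
lemma IsCycleAt.card_image {i : Fin n} {w : (Fin (k + 1) → Fin n) × (Fin k → Fin m)} (hk : k ≠ 0)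
    (hw : IsCycleAt E i w) :
    (univ.image w.1).card = k :=
  Fin.card_image_of_closed w.1 hk (hw.2.2.1.trans hw.2.1.symm) hw.2.2.2

open Classical in
lemma omega_pow_apply_self (hk : 2 ≤ k) (i : Fin n) :
    (Omega E ^ k) i i = ∑ w : (Fin (k + 1) → Fin n) × (Fin k → Fin m),
      if IsCycleAt E i w then
        zetaBlade (Fin n) (Finset (Fin m)) (univ.image w.1) *
          epsBlade (Finset (Fin n)) (Fin m) (univ.image w.2)
      else 0 := by
  rw [omega_pow_apply, Fintype.sum_prod_type]
  refine Finset.sum_congr rfl fun vs _ => Finset.sum_congr rfl fun es _ => ?_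
  by_cases h : vs 0 = i ∧ vs (Fin.last k) = i
  · rw [if_pos h, walkMonomial_of_closed E hk vs es (h.2.trans h.1.symm)]
    exact if_congr (by simp [IsCycleAt, h]) rfl rfl
  · rw [if_neg h, if_neg fun hc => h ⟨hc.2.1, hc.2.2.1⟩]

end Cycles

theorem zeon_hypergraph_cycle_enumeration_general {n m : ℕ} (E : Fin m → Finset (Fin n))
    (k : ℕ) (hk : 2 ≤ k) (i : Fin n) :
    ((Omega E) ^ k) i i =
      ∑ I ∈ (Finset.univ : Finset (Fin n)).powersetCard k,
        ∑ J ∈ (Finset.univ : Finset (Fin m)).powerset,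
          (Nat.card {w : (Fin (k + 1) → Fin n) × (Fin k → Fin m) //
              IsWalk E w.1 w.2 ∧ w.1 0 = i ∧ w.1 (Fin.last k) = i ∧
              Function.Injective (fun t : Fin k => w.1 t.castSucc) ∧
              Finset.image w.1 Finset.univ = I ∧ Finset.image w.2 Finset.univ = J}) •
            (zetaBlade (Fin n) (Finset (Fin m)) I * epsBlade (Finset (Fin n)) (Fin m) J) := by
  classical
  rw [omega_pow_apply_self E hk i, Finset.sum_sum_natCard_fiber_smul (IsCycleAt E i)
    (fun w => univ.image w.1) (fun w => univ.image w.2) _ _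
    (fun w hw => Finset.mem_powersetCard.2 ⟨Finset.subset_univ _, hw.card_image (by omega)⟩)
    (fun _ _ => Finset.mem_powerset.2 (Finset.subset_univ _)) _
    (fun _ _ _ => by simp only [IsCycleAt, and_assoc, Fin.init_def])]

/-- For a hypergraph `H` with `n` vertices and `m` (nonempty) hyperedges,
for every `k ≥ 2` and every vertex `i`,
`(Ω^k)_{ii} = Σ_{I,J} ω_{I,J} ζ_I ε_J`, the sum being over subsets `I` of the vertex set
with `|I| = k` and subsets `J` of the hyperedge index set, where `ω_{I,J}` is the number
of `k`-cycles based at `v_i` (closed `k`-walks whose first `k` vertices are pairwise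
distinct) with visited vertex set `I` and traversed hyperedge set `J`. -/
theorem zeon_hypergraph_cycle_enumeration {n m : ℕ} (E : Fin m → Finset (Fin n))
    (hE : ∀ l : Fin m, (E l).Nonempty)
    (k : ℕ) (hk : 2 ≤ k) (i : Fin n) :
    ((Omega E) ^ k) i i =
      ∑ I ∈ (Finset.univ : Finset (Fin n)).powersetCard k,
        ∑ J ∈ (Finset.univ : Finset (Fin m)).powerset,
          (Nat.card {w : (Fin (k + 1) → Fin n) × (Fin k → Fin m) //
              IsWalk E w.1 w.2 ∧ w.1 0 = i ∧ w.1 (Fin.last k) = i ∧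
              Function.Injective (fun t : Fin k => w.1 t.castSucc) ∧
              Finset.image w.1 Finset.univ = I ∧ Finset.image w.2 Finset.univ = J}) •
            (zetaBlade (Fin n) (Finset (Fin m)) I * epsBlade (Finset (Fin n)) (Fin m) J) :=
  zeon_hypergraph_cycle_enumeration_general E k hk i
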